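/- Let R be a commutative Noetherian ring, f : F → M a flat precover of R-modules, and E an injective cogenerator. If Hom_R(f,E) : Hom_R(M,E) → Hom_R(F,E) is an injective envelope, then f is a flat cover. -/

import Mathlib

/-!
Let `φ : F → F` satisfy `f ∘ φ = f`. Dualizing, `Hom(φ, E)` fixes the image of `Hom(f, E)`, and
an endomorphism of an injective envelope fixing the essential submodule is an automorphism: it is
injective by essentiality, hence split, and the resulting idempotent also fixes the submodule, so
it is the identity. Since `E` is an injective cogenerator, `φ` is an automorphism as soon as
`Hom(φ, E)` is one.
-/

universe u

variable (R : Type u) [CommRing R]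

/-- A morphism `f : F → M` with `F` flat is a flat precover if every morphism from a
flat module to `M` factors through `f`. -/
def IsFlatPrecover {F M : Type u} [AddCommGroup F] [AddCommGroup M] [Module R F]
    [Module R M] (f : F →ₗ[R] M) : Prop :=
  Module.Flat R F ∧
    ∀ (F' : Type u) [AddCommGroup F'] [Module R F'], Module.Flat R F' →
      ∀ g : F' →ₗ[R] M, ∃ h : F' →ₗ[R] F, f ∘ₗ h = g

/-- A flat precover `f : F → M` is a flat cover if every `h : F → F` with `f ∘ h = f`
is an automorphism. -/
def IsFlatCover {F M : Type u} [AddCommGroup F] [AddCommGroup M] [Module R F]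
    [Module R M] (f : F →ₗ[R] M) : Prop :=
  IsFlatPrecover R f ∧ ∀ h : F →ₗ[R] F, f ∘ₗ h = f → Function.Bijective h

/-- A morphism `i : M → E` is an injective envelope if `E` is injective, `i` is
injective, and the image of `i` is an essential submodule of `E`. -/
def IsInjectiveEnvelope {M E : Type u} [AddCommGroup M] [AddCommGroup E] [Module R M]
    [Module R E] (i : M →ₗ[R] E) : Prop :=
  Module.Injective R E ∧ Function.Injective i ∧
    ∀ N : Submodule R E, N ≠ ⊥ → N ⊓ LinearMap.range i ≠ ⊥

/-- An injective cogenerator is an injective module `E` such that `Hom(N, E) ≠ 0`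
for every nonzero module `N`. -/
def IsInjectiveCogenerator (E : Type u) [AddCommGroup E] [Module R E] : Prop :=
  Module.Injective R E ∧
    ∀ (N : Type u) [AddCommGroup N] [Module R N], (∃ x : N, x ≠ 0) →
      ∃ g : N →ₗ[R] E, g ≠ 0

section Envelope

variable {R} {M E : Type u} [AddCommGroup M] [AddCommGroup E] [Module R M] [Module R E]

theorem injective_of_comp_eq_of_essential {i : M →ₗ[R] E}
    (hess : ∀ N : Submodule R E, N ≠ ⊥ → N ⊓ LinearMap.range i ≠ ⊥)
    {φ : E →ₗ[R] E} (hφ : φ ∘ₗ i = i) : Function.Injective φ := by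
  rw [← LinearMap.ker_eq_bot]
  by_contra hker
  refine hess _ hker (eq_bot_iff.mpr ?_)
  rintro _ ⟨hx, m, rfl⟩
  have hfix : φ (i m) = i m := LinearMap.congr_fun hφ m
  exact (Submodule.mem_bot R).mpr (hfix ▸ LinearMap.mem_ker.mp hx)

theorem IsInjectiveEnvelope.bijective_of_comp_eq {i : M →ₗ[R] E} (hi : IsInjectiveEnvelope R i)
    {φ : E →ₗ[R] E} (hφ : φ ∘ₗ i = i) : Function.Bijective φ := by
  have hφi : ∀ m, φ (i m) = i m := LinearMap.congr_fun hφ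
  have hinj := injective_of_comp_eq_of_essential hi.2.2 hφ
  obtain ⟨r, hr⟩ := hi.1.out φ hinj LinearMap.id
  have hr' : ∀ x, r (φ x) = x := hr
  have hidem : ∀ x, φ (r (φ (r x))) = φ (r x) := fun x => by rw [hr']
  have hfix : (φ ∘ₗ r) ∘ₗ i = i := LinearMap.ext fun m => by
    change φ (r (i m)) = i m
    rw [← hφi m, hr', hφi]
  have he := injective_of_comp_eq_of_essential hi.2.2 hfix
  exact ⟨hinj, fun x => ⟨r x, he (hidem x)⟩⟩

end Envelope

namespace IsInjectiveCogenerator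

variable {R} {E : Type u} [AddCommGroup E] [Module R E]

theorem exists_apply_ne_zero (hE : IsInjectiveCogenerator R E) {N : Type u} [AddCommGroup N]
    [Module R N] {x : N} (hx : x ≠ 0) : ∃ g : N →ₗ[R] E, g x ≠ 0 := by
  obtain ⟨g₀, hg₀⟩ :=
    hE.2 (R ∙ x) ⟨⟨x, Submodule.mem_span_singleton_self x⟩, by simpa using hx⟩
  obtain ⟨g, hg⟩ := hE.1.out (R ∙ x).subtype (R ∙ x).injective_subtype g₀
  refine ⟨g, fun hgx => hg₀ (LinearMap.ext fun y => ?_)⟩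
  have hle : R ∙ x ≤ LinearMap.ker g := (Submodule.span_singleton_le_iff_mem _ _).mpr hgx
  rw [← hg]
  exact hle y.2

theorem injective_of_lcomp_surjective (hE : IsInjectiveCogenerator R E)
    {N N' : Type u} [AddCommGroup N] [AddCommGroup N'] [Module R N] [Module R N']
    {φ : N →ₗ[R] N'} (hφ : Function.Surjective (LinearMap.lcomp R E φ)) :
    Function.Injective φ := by
  rw [← LinearMap.ker_eq_bot, eq_bot_iff]
  intro x hx
  by_contra hx0
  obtain ⟨g, hg⟩ := hE.exists_apply_ne_zero ((Submodule.mem_bot R).not.mp hx0)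
  obtain ⟨g', rfl⟩ := hφ g
  exact hg (by simp [LinearMap.mem_ker.mp hx])

theorem surjective_of_lcomp_injective (hE : IsInjectiveCogenerator R E)
    {N N' : Type u} [AddCommGroup N] [AddCommGroup N'] [Module R N] [Module R N']
    {φ : N →ₗ[R] N'} (hφ : Function.Injective (LinearMap.lcomp R E φ)) :
    Function.Surjective φ := by
  rw [← LinearMap.range_eq_top]
  by_contra hne
  have : Nontrivial (N' ⧸ LinearMap.range φ) := Submodule.Quotient.nontrivial_iff.mpr hne
  obtain ⟨g, hg⟩ := hE.2 (N' ⧸ LinearMap.range φ) (exists_ne 0)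
  have hgφ :
      LinearMap.lcomp R E φ (g ∘ₗ (LinearMap.range φ).mkQ) = LinearMap.lcomp R E φ 0 := by
    rw [map_zero, LinearMap.lcomp_apply', LinearMap.comp_assoc, LinearMap.range_mkQ_comp,
      LinearMap.comp_zero]
  refine hg (LinearMap.lcomp_injective_of_surjective (S := R) _ (Submodule.mkQ_surjective _) ?_)
  exact (hφ hgφ).trans (map_zero _).symm

end IsInjectiveCogenerator

theorem flatCover_of_dual_injectiveEnvelope
    {F M : Type u} [AddCommGroup F] [AddCommGroup M] [Module R F] [Module R M]
    (f : F →ₗ[R] M) (hf : IsFlatPrecover R f)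
    (E : Type u) [AddCommGroup E] [Module R E] (hE : IsInjectiveCogenerator R E)
    (h : IsInjectiveEnvelope R (LinearMap.lcomp R E f)) :
    IsFlatCover R f := by
  refine ⟨hf, fun φ hφ => ?_⟩
  have hdual : LinearMap.lcomp R E φ ∘ₗ LinearMap.lcomp R E f = LinearMap.lcomp R E f :=
    LinearMap.ext fun g => by
      rw [LinearMap.comp_apply, LinearMap.lcomp_apply', LinearMap.lcomp_apply',
        LinearMap.comp_assoc, hφ]
  obtain ⟨hinj, hsurj⟩ := h.bijective_of_comp_eq hdual
  exact ⟨hE.injective_of_lcomp_surjective hsurj, hE.surjective_of_lcomp_injective hinj⟩
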